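/- arXiv:1411.2951 — 3 statements merged into one kernel-verified Lean document; each statement's English description precedes it below -/
import Mathlib

section
/- Let $\mathcal{T}_k$ denote the perfect binary tree of height $k$ (a rooted tree in which the root has degree 1, every leaf has height exactly $k$, and every internal non-root vertex has exactly 2 children), viewed as a metric graph with unit-length edges. Define $u(k)$ to be the smallest natural number such that for every continuous function $f \colon \mathcal{T}_k \to \mathbb{R}$ there exists some $x \in \mathbb{R}$ such that $f$ attains the value $x$ on at least $u(k)$ distinct edges of $\mathcal{T}_k$. Then $u(k+2) \geq u(k) + 1$ for all $k \geq 1$. -/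
noncomputable section

/-- Edges of the perfect binary tree `𝒯 k` of height `k`: an edge is indexed by the
binary string recording the branching choices above it.  The empty string is the stem
edge at the root (which therefore has degree one); strings of length `d` index the
`2^d` edges at depth `d`. -/
abbrev PBTEdge (k : ℕ) : Type := {l : List Bool // l.length < k}

/-- The gluing relation on `(edge, parameter)` pairs: the endpoint `t = 1` of an edge
`l` is identified with the endpoint `t = 0` of each of its two child edges `l ++ [b]`. -/
def PBTRel (k : ℕ) (p q : PBTEdge k × unitInterval) : Prop :=
  ∃ b : Bool, q.1.1 = p.1.1 ++ [b] ∧ p.2 = 1 ∧ q.2 = 0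

/-- The perfect binary tree of height `k` as a topological space (the metric graph with
unit edges): the disjoint union of the closed unit edges with endpoints glued. -/
abbrev PBT (k : ℕ) : Type := Quot (PBTRel k)

/-- The point of `𝒯 k` at parameter `t` along edge `e`. -/
def PBT.pt {k : ℕ} (e : PBTEdge k) (t : unitInterval) : PBT k := Quot.mk _ (e, t)

/-- `f` attains the value `x` on the (closed) edge `e` of `𝒯 k`. -/
def AttainsOn {k : ℕ} (f : PBT k → ℝ) (e : PBTEdge k) (x : ℝ) : Prop :=
  ∃ t : unitInterval, f (PBT.pt e t) = x

/-- `f` attains some single value `x` on at least `n` distinct edges of `𝒯 k`. -/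
def AttainsAtLeast {k : ℕ} (f : PBT k → ℝ) (n : ℕ) : Prop :=
  ∃ x : ℝ, ∃ s : Finset (PBTEdge k), n ≤ s.card ∧ ∀ e ∈ s, AttainsOn f e x

/-- `u k` is the largest number `n` (the paper's "smallest natural number" bounding the
guarantee) such that every continuous real-valued function on `𝒯 k` attains some value
on at least `n` distinct edges. -/
def uPBT (k : ℕ) : ℕ :=
  sSup {n : ℕ | ∀ f : PBT k → ℝ, Continuous f → AttainsAtLeast f n}


/-!
Let `f` be continuous on `𝒯 (k + 2)` and record its values `y` at the vertices. Choose branching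
choices `i, j` so that the copy of `𝒯 k` hanging below the word `[i, j]` contains
neither a vertex where `y` is minimal nor one where `y` is maximal. Applying the definition of
`u k` to the piecewise-linear interpolation of `y` on that copy yields a value `x` and `u k` edges
of the copy whose endpoint values enclose `x`; by the intermediate value theorem `f` attains `x`
on each of them. As `x` lies between the extreme values of `y`, it is also enclosed by the
endpoint values of some edge on the path from a minimum through the root to a maximum, and this
path avoids the copy.
-/

open Set

/-- Vertices of `𝒯 k`: `none` is the root and `some e` is the lower endpoint of the edge `e`. -/
abbrev PBTVert (k : ℕ) : Type := Option (PBTEdge k)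

variable {m : ℕ}

instance : Finite (PBTEdge m) := (List.finite_length_lt Bool m).to_subtype

namespace PBTEdge

def upper (e : PBTEdge m) : PBTVert m :=
  if h : e.1 = [] then none
  else some ⟨e.1.dropLast, by have := e.2; rw [List.length_dropLast]; omega⟩

lemma upper_append_singleton (l : List Bool) (b : Bool) (h : (l ++ [b]).length < m) :
    upper ⟨l ++ [b], h⟩ = some ⟨l, by simp at h; omega⟩ := by
  simp [upper]

def embed {k : ℕ} (i j : Bool) : PBTEdge k ↪ PBTEdge (k + 2) where
  toFun e := ⟨i :: j :: e.1, by simp [e.2]⟩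
  inj' _ _ h := Subtype.ext (List.cons_injective (List.cons_injective (congrArg Subtype.val h)))

@[simp] lemma coe_embed {k : ℕ} (i j : Bool) (e : PBTEdge k) : (embed i j e).1 = i :: j :: e.1 :=
  rfl

lemma prefix_embed {k : ℕ} (i j : Bool) (e : PBTEdge k) : [i, j] <+: (embed i j e).1 :=
  ⟨e.1, rfl⟩

end PBTEdge

namespace PBTVert

def embed {k : ℕ} (i j : Bool) : PBTVert k → PBTVert (k + 2)
  | none => some ⟨[i], by simp⟩
  | some e => some (PBTEdge.embed i j e)

lemma upper_embed {k : ℕ} (i j : Bool) (e : PBTEdge k) :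
    (PBTEdge.embed i j e).upper = embed i j e.upper := by
  rcases e with ⟨_ | _, _⟩
  · rfl
  · simp [PBTEdge.upper, embed]
    rfl

def pt (hm : 0 < m) : PBTVert m → PBT m
  | none => PBT.pt ⟨[], hm⟩ 0
  | some e => PBT.pt e 1

def word : PBTVert m → List Bool
  | none => []
  | some e => e.1

end PBTVert

namespace PBT

lemma pt_zero (hm : 0 < m) (e : PBTEdge m) : PBT.pt e 0 = e.upper.pt hm := by
  rcases e with ⟨l, hl⟩
  rcases l.eq_nil_or_concat' with rfl | ⟨l, b, rfl⟩
  · rfl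
  · rw [PBTEdge.upper_append_singleton]
    exact (Quot.sound ⟨b, rfl, rfl, rfl⟩).symm

lemma continuous_pt (e : PBTEdge m) : Continuous (PBT.pt e) :=
  continuous_quot_mk.comp (Continuous.prodMk_right e)

def interp (y : PBTVert m → ℝ) : PBT m → ℝ :=
  Quot.lift (fun p : PBTEdge m × unitInterval => (1 - (p.2 : ℝ)) * y p.1.upper + p.2 * y p.1)
    (by
      rintro ⟨⟨l, _⟩, _⟩ ⟨⟨_, _⟩, _⟩ ⟨b, h, rfl, rfl⟩
      simp only at h
      subst h
      simp [PBTEdge.upper_append_singleton])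

lemma continuous_interp (y : PBTVert m → ℝ) : Continuous (interp y) := by
  apply continuous_quot_lift
  have h₀ : Continuous fun e : PBTEdge m => y e.upper := continuous_of_discreteTopology
  have h₁ : Continuous fun e : PBTEdge m => y e := continuous_of_discreteTopology
  fun_prop

lemma mem_uIcc_of_attainsOn_interp {y : PBTVert m → ℝ} {e : PBTEdge m} {x : ℝ}
    (h : AttainsOn (interp y) e x) : x ∈ uIcc (y e.upper) (y e) := by
  obtain ⟨s, rfl⟩ := h
  rw [← segment_eq_uIcc, segment_eq_image]
  exact ⟨s, s.2, by simp [interp, PBT.pt]⟩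

end PBT

lemma attainsOn_of_mem_uIcc (hm : 0 < m) {f : PBT m → ℝ} (hf : Continuous f) (e : PBTEdge m)
    {x : ℝ} (hx : x ∈ uIcc (f (e.upper.pt hm)) (f (PBTVert.pt hm (some e)))) :
    AttainsOn f e x := by
  rw [← PBT.pt_zero] at hx
  have hg : Continuous fun s => f (PBT.pt e s) := hf.comp (PBT.continuous_pt e)
  rcases mem_uIcc.mp hx with ⟨h0, h1⟩ | ⟨h1, h0⟩
  · exact mem_range_of_exists_le_of_exists_ge hg ⟨0, h0⟩ ⟨1, h1⟩
  · exact mem_range_of_exists_le_of_exists_ge hg ⟨1, h1⟩ ⟨0, h0⟩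

lemma exists_edge_prefix_word_mem_uIcc (hm : 0 < m) (y : PBTVert m → ℝ) (v : PBTVert m) {x : ℝ}
    (hx : x ∈ uIcc (y none) (y v)) :
    ∃ e : PBTEdge m, e.1 <+: v.word ∧ x ∈ uIcc (y e.upper) (y e) := by
  rcases v with _ | ⟨l, hl⟩
  · exact ⟨⟨[], hm⟩, List.nil_prefix, by simp_all [PBTEdge.upper]⟩
  induction l using List.reverseRecOn with
  | nil => exact ⟨⟨[], hm⟩, List.nil_prefix, hx⟩
  | append_singleton l b ih =>
    have hl' : l.length < m := by simp at hl; omega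
    rcases uIcc_subset_uIcc_union_uIcc (b := y (some ⟨l, hl'⟩)) hx with hx | hx
    · obtain ⟨e, he, hxe⟩ := ih hl' hx
      exact ⟨e, he.trans (List.prefix_append l [b]), hxe⟩
    · exact ⟨⟨l ++ [b], hl⟩, List.prefix_refl _, by rwa [PBTEdge.upper_append_singleton]⟩

lemma List.exists_pair_not_prefix (l₁ l₂ : List Bool) :
    ∃ i j : Bool, ¬ [i, j] <+: l₁ ∧ ¬ [i, j] <+: l₂ := by
  refine ⟨!l₁.headI, !(l₂.getD 1 false), ?_, ?_⟩ <;> rintro ⟨r, hr⟩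
  · simpa using congrArg List.headI hr
  · simpa using congrArg (List.getD · 1 false) hr

lemma exists_branch_forall_mem_uIcc (hm : 0 < m) (y : PBTVert m → ℝ) :
    ∃ i j : Bool, ∀ (x : ℝ) (u v : PBTVert m), x ∈ uIcc (y u) (y v) →
      ∃ e : PBTEdge m, ¬ [i, j] <+: e.1 ∧ x ∈ uIcc (y e.upper) (y e) := by
  obtain ⟨α, hα⟩ := Finite.exists_min y
  obtain ⟨β, hβ⟩ := Finite.exists_max y
  obtain ⟨i, j, hiα, hiβ⟩ := List.exists_pair_not_prefix α.word β.word
  refine ⟨i, j, fun x u v hx => ?_⟩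
  have hxα : y α ≤ x := (min_le_iff.mp hx.1).elim (hα _).trans (hα _).trans
  have hxβ : x ≤ y β := (le_max_iff.mp hx.2).elim (·.trans (hβ _)) (·.trans (hβ _))
  rcases le_total x (y none) with h | h
  · obtain ⟨e, he, hxe⟩ := exists_edge_prefix_word_mem_uIcc hm y α (mem_uIcc.mpr (.inr ⟨hxα, h⟩))
    exact ⟨e, fun hij => hiα (hij.trans he), hxe⟩
  · obtain ⟨e, he, hxe⟩ := exists_edge_prefix_word_mem_uIcc hm y β (mem_uIcc.mpr (.inl ⟨h, hxβ⟩))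
    exact ⟨e, fun hij => hiβ (hij.trans he), hxe⟩

lemma bddAbove_attainsAtLeast (m : ℕ) :
    BddAbove {n : ℕ | ∀ f : PBT m → ℝ, Continuous f → AttainsAtLeast f n} := by
  have := Fintype.ofFinite (PBTEdge m)
  refine ⟨Fintype.card (PBTEdge m), fun n hn => ?_⟩
  obtain ⟨_, s, hs, -⟩ := hn 0 continuous_const
  exact hs.trans s.card_le_univ

lemma attainsAtLeast_uPBT (m : ℕ) {f : PBT m → ℝ} (hf : Continuous f) :
    AttainsAtLeast f (uPBT m) :=
  Nat.sSup_mem ⟨0, fun _ _ => ⟨0, ∅, le_rfl, by simp⟩⟩ (bddAbove_attainsAtLeast m) f hf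

lemma attainsAtLeast_one (hm : 0 < m) (f : PBT m → ℝ) : AttainsAtLeast f 1 :=
  ⟨f (PBT.pt ⟨[], hm⟩ 0), {⟨[], hm⟩}, le_rfl, fun _ he => Finset.mem_singleton.mp he ▸ ⟨0, rfl⟩⟩

lemma attainsAtLeast_uPBT_add_one {k : ℕ} {f : PBT (k + 2) → ℝ} (hf : Continuous f) :
    AttainsAtLeast f (uPBT k + 1) := by
  have hm : 0 < k + 2 := by omega
  rcases Nat.eq_zero_or_pos (uPBT k) with h0 | hpos
  · exact h0 ▸ attainsAtLeast_one hm f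
  set y : PBTVert (k + 2) → ℝ := fun v => f (v.pt hm)
  obtain ⟨i, j, hij⟩ := exists_branch_forall_mem_uIcc hm y
  obtain ⟨x, s, hcard, hs⟩ :=
    attainsAtLeast_uPBT k (PBT.continuous_interp (y ∘ PBTVert.embed i j))
  have hcopy : ∀ e ∈ s, x ∈ uIcc (y (PBTEdge.embed i j e).upper) (y (PBTEdge.embed i j e)) := by
    intro e he
    rw [PBTVert.upper_embed]
    exact PBT.mem_uIcc_of_attainsOn_interp (hs e he)
  obtain ⟨e₁, he₁⟩ := Finset.card_pos.mp (hpos.trans_le hcard)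
  obtain ⟨e₀, he₀, hxe₀⟩ := hij x _ _ (hcopy e₁ he₁)
  have hnotMem : e₀ ∉ s.map (PBTEdge.embed i j) := by
    rw [Finset.mem_map]
    rintro ⟨e, -, rfl⟩
    exact he₀ (PBTEdge.prefix_embed i j e)
  refine ⟨x, insert e₀ (s.map (PBTEdge.embed i j)), ?_, ?_⟩
  · rw [Finset.card_insert_of_notMem hnotMem, Finset.card_map]
    omega
  · intro e he
    rcases Finset.mem_insert.mp he with rfl | he
    · exact attainsOn_of_mem_uIcc hm hf e hxe₀
    · obtain ⟨e', he', rfl⟩ := Finset.mem_map.mp he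
      exact attainsOn_of_mem_uIcc hm hf _ (hcopy e' he')

theorem uPBT_add_two_general (k : ℕ) : uPBT k + 1 ≤ uPBT (k + 2) :=
  le_csSup (bddAbove_attainsAtLeast (k + 2)) fun _ => attainsAtLeast_uPBT_add_one

/-- `u (k + 2) ≥ u k + 1` for all `k ≥ 1`. -/
theorem uPBT_add_two (k : ℕ) (hk : 1 ≤ k) : uPBT k + 1 ≤ uPBT (k + 2) :=
  uPBT_add_two_general k

end
end

section
/- The quotient group $\big(\prod_{i \in \mathbb{N}} \mathbb{Z}\big) / \big(\bigoplus_{i \in \mathbb{N}} \mathbb{Z}\big)$ is not a finitely generated abelian group. -/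
/-- The subgroup `⨁_{i ∈ ℕ} ℤ` of finitely supported sequences inside `∏_{i ∈ ℕ} ℤ`. -/
def finSupportSubgroup : AddSubgroup (ℕ → ℤ) where
  carrier := {f | (Function.support f).Finite}
  zero_mem' := by simp
  add_mem' {a b} ha hb := (ha.union hb).subset (Function.support_add a b)
  neg_mem' {a} ha := by simpa using ha

/-- `ℕ → ℤ` is uncountable (Cantor). -/
lemma not_countable_pi_int : ¬ Countable (ℕ → ℤ) := by
  intro h
  classical
  have hinj : Function.Injective (fun s : Set ℕ => (fun n => if n ∈ s then (1 : ℤ) else 0)) := by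
    intro s t hst
    ext n
    have := congrFun hst n
    by_cases hn : n ∈ s <;> by_cases hm : n ∈ t <;> simp_all
  have : Countable (Set ℕ) := hinj.countable
  obtain ⟨e, he⟩ := this.exists_injective_nat
  exact Function.cantor_injective e he

/-- The subgroup of finitely supported sequences is countable. -/
lemma countable_finSupportSubgroup : Countable finSupportSubgroup := by
  have hsurj : Function.Surjective
      (fun f : (ℕ →₀ ℤ) => (⟨(f : ℕ → ℤ), f.finite_support⟩ : finSupportSubgroup)) := by
    rintro ⟨f, hf⟩
    exact ⟨Finsupp.ofSupportFinite f hf, rfl⟩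
  exact hsurj.countable

/-- The quotient `(∏_{i ∈ ℕ} ℤ) / (⨁_{i ∈ ℕ} ℤ)` is not a finitely
generated abelian group. -/
theorem product_mod_directSum_not_fg :
    ¬ AddGroup.FG ((ℕ → ℤ) ⧸ finSupportSubgroup) := by
  intro hfg
  have hmod : Module.Finite ℤ ((ℕ → ℤ) ⧸ finSupportSubgroup) :=
    Module.Finite.iff_addGroup_fg.mpr hfg
  obtain ⟨n, s, hs⟩ := Module.Finite.exists_fin (R := ℤ)
    (M := (ℕ → ℤ) ⧸ finSupportSubgroup)
  have hQ : Countable ((ℕ → ℤ) ⧸ finSupportSubgroup) := by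
    have h1 : Countable (Submodule.span ℤ (Set.range s)) := inferInstance
    rw [hs] at h1
    exact (Submodule.topEquiv (R := ℤ) (M := (ℕ → ℤ) ⧸ finSupportSubgroup)).toEquiv
      |>.countable_iff.mp h1
  have hH : Countable finSupportSubgroup := countable_finSupportSubgroup
  have : Countable (ℕ → ℤ) :=
    (AddSubgroup.addGroupEquivQuotientProdAddSubgroup
      (s := finSupportSubgroup)).countable_iff.mpr inferInstance
  exact not_countable_pi_int this
end

section
/- Let $X = (\mathbb{Q} \times \mathbb{R}) \cup (\mathbb{R} \times \{0\}) \subset \mathbb{R}^2$ with the metric induced from the Euclidean plane. Then $X$ is connected, $X$ is quasi-isometric to $\mathbb{R}^2$, and $\mathbb{R}^2$ has exactly one end, while $X$ has infinitely many ends. -/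
noncomputable section

/-- A proper ray in a topological space: a proper continuous map `[0,∞) → X`. -/
def ProperRay (X : Type*) [TopologicalSpace X] : Type _ :=
  {r : C(↥(Set.Ici (0 : ℝ)), X) // IsProperMap (⇑r)}

/-- Two proper rays determine the same end if beyond every compact set they eventually
lie in the same path component of its complement. -/
def SameEnd {X : Type*} [TopologicalSpace X] (r r' : ProperRay X) : Prop :=
  ∀ K : Set X, IsCompact K → ∃ T : ↥(Set.Ici (0 : ℝ)),
    (∀ t, T ≤ t → r.1 t ∉ K ∧ r'.1 t ∉ K) ∧ JoinedIn Kᶜ (r.1 T) (r'.1 T)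

/-- The set of ends of a topological space: proper rays modulo the same-end relation. -/
def Ends (X : Type*) [TopologicalSpace X] : Type _ :=
  Quot (@SameEnd X _)

/-- The end represented by a proper ray. -/
def ProperRay.end {X : Type*} [TopologicalSpace X] (r : ProperRay X) : Ends X :=
  Quot.mk _ r


/-- The subset `(ℚ × ℝ) ∪ (ℝ × {0})` of the Euclidean plane. -/
def ratPlane : Set (EuclideanSpace ℝ (Fin 2)) :=
  {p | (∃ q : ℚ, (q : ℝ) = p 0) ∨ p 1 = 0}

/-!
The inclusion of `X` into `ℝ²` is an isometric embedding with dense image, hence a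
quasi-isometry. Outside a closed ball the plane is path connected, so all proper rays in `ℝ²`
define the same end. In `X`, the vertical rays over rationals `q < q'` define different ends:
once the compact segment `[q, q'] × {0}` is removed, the first coordinate of a path between
them must take an irrational value `α ∈ (q, q')`, and the only point of `X` above `α` is
`(α, 0)`.
-/

open Set Filter Metric

section NormedSpace

variable {E : Type*} [NormedAddCommGroup E] [NormedSpace ℝ E]

theorem isPathConnected_compl_closedBall (h : 1 < Module.rank ℝ E) (x : E) {r : ℝ}
    (hr : 0 ≤ r) : IsPathConnected (closedBall x r)ᶜ := by
  have hpc := ((isPathConnected_sphere h 0 zero_le_one).prod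
    ((convex_Ioi r).isPathConnected nonempty_Ioi)).image
    (f := fun p : E × ℝ => x + p.2 • p.1) (by fun_prop)
  convert hpc using 1
  ext y
  simp only [mem_compl_iff, mem_closedBall, not_le, mem_image, Prod.exists, mem_prod,
    mem_sphere_zero_iff_norm, mem_Ioi]
  constructor
  · intro hy
    have hpos : 0 < ‖y - x‖ := dist_eq_norm y x ▸ hr.trans_lt hy
    refine ⟨‖y - x‖⁻¹ • (y - x), ‖y - x‖, ⟨?_, dist_eq_norm y x ▸ hy⟩, ?_⟩
    · rw [norm_smul, norm_inv, norm_norm, inv_mul_cancel₀ hpos.ne']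
    · rw [smul_smul, mul_inv_cancel₀ hpos.ne', one_smul, add_sub_cancel]
  · rintro ⟨u, s, ⟨hu, hs⟩, rfl⟩
    rwa [dist_eq_norm, add_sub_cancel_left, norm_smul, hu, mul_one, Real.norm_of_nonneg
      (hr.trans hs.le)]

end NormedSpace

namespace ProperRay

variable {X : Type*} [TopologicalSpace X]

theorem eventually_notMem (r : ProperRay X) {K : Set X} (hK : IsCompact K) :
    ∀ᶠ t in atTop, r.1 t ∉ K := by
  obtain ⟨M, hM⟩ := (r.2.isCompact_preimage hK).bddAbove
  exact (eventually_gt_atTop M).mono fun t ht htK => (hM htK).not_gt ht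

theorem joinedIn_of_forall_ge (r : ProperRay X) {a b : Ici (0 : ℝ)} (hab : a ≤ b) {S : Set X}
    (hS : ∀ t, a ≤ t → r.1 t ∈ S) : JoinedIn S (r.1 a) (r.1 b) := by
  have hγ : Continuous fun s : ℝ => r.1 (projIci 0 s) :=
    r.1.continuous.comp ((continuous_const.max continuous_id).subtype_mk _)
  have hpc := ((convex_Icc (a : ℝ) b).isPathConnected (nonempty_Icc.2 hab)).image hγ
  refine (hpc.joinedIn _ ⟨a, left_mem_Icc.2 hab, ?_⟩ _ ⟨b, right_mem_Icc.2 hab, ?_⟩).mono ?_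
  · exact congrArg r.1 (projIci_coe a)
  · exact congrArg r.1 (projIci_coe b)
  · rintro _ ⟨s, hs, rfl⟩
    refine hS _ ?_
    rw [projIci_of_mem (a.2.trans hs.1)]
    exact hs.1

theorem sameEnd_iff_eventually_joinedIn {r r' : ProperRay X} :
    SameEnd r r' ↔ ∀ K, IsCompact K → ∀ᶠ t in atTop, JoinedIn Kᶜ (r.1 t) (r'.1 t) := by
  refine forall₂_congr fun K hK => ⟨?_, fun hj => ?_⟩
  · rintro ⟨T, hout, hT⟩
    refine eventually_atTop.2 ⟨T, fun t ht => ?_⟩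
    exact ((r.joinedIn_of_forall_ge ht fun s hs => (hout s hs).1).symm.trans hT).trans
      (r'.joinedIn_of_forall_ge ht fun s hs => (hout s hs).2)
  · obtain ⟨T, hT⟩ := eventually_atTop.1
      ((r.eventually_notMem hK).and ((r'.eventually_notMem hK).and hj))
    exact ⟨T, fun t ht => ⟨(hT t ht).1, (hT t ht).2.1⟩, (hT T le_rfl).2.2⟩

theorem sameEnd_equivalence : Equivalence (@SameEnd X _) where
  refl r := sameEnd_iff_eventually_joinedIn.2 fun _ hK =>
    (r.eventually_notMem hK).mono fun _ ht => JoinedIn.refl ht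
  symm h := sameEnd_iff_eventually_joinedIn.2 fun K hK =>
    (sameEnd_iff_eventually_joinedIn.1 h K hK).mono fun _ ht => ht.symm
  trans h h' := sameEnd_iff_eventually_joinedIn.2 fun K hK =>
    ((sameEnd_iff_eventually_joinedIn.1 h K hK).and
      (sameEnd_iff_eventually_joinedIn.1 h' K hK)).mono fun _ ht => ht.1.trans ht.2

theorem end_eq_end_iff {r r' : ProperRay X} : r.end = r'.end ↔ SameEnd r r' :=
  Quot.eq.trans sameEnd_equivalence.eqvGen_iff

def codRestrict (r : ProperRay X) (s : Set X)
    (hs : ∀ t, r.1 t ∈ s) : ProperRay s :=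
  ⟨⟨fun t => ⟨r.1 t, hs t⟩, r.1.continuous.subtype_mk _⟩,
    isProperMap_of_comp_of_inj (r.1.continuous.subtype_mk _) continuous_subtype_val r.2
      Subtype.val_injective⟩

section NormedSpace

variable {E : Type*} [NormedAddCommGroup E] [NormedSpace ℝ E]

def affine (x : E) {v : E} (hv : v ≠ 0) : ProperRay E :=
  ⟨⟨fun t => x + (t : ℝ) • v, by fun_prop⟩,
    ((Homeomorph.addLeft x).isClosedEmbedding.comp <| (isClosedEmbedding_smul_left hv).comp
      isClosed_Ici.isClosedEmbedding_subtypeVal).isProperMap⟩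

theorem sameEnd_of_one_lt_rank [ProperSpace E] (h : 1 < Module.rank ℝ E)
    (r r' : ProperRay E) : SameEnd r r' := by
  refine sameEnd_iff_eventually_joinedIn.2 fun K hK => ?_
  obtain ⟨R, hR, hKR⟩ := hK.isBounded.subset_closedBall_lt 0 0
  have hout (r : ProperRay E) : ∀ᶠ t in atTop, r.1 t ∈ (closedBall (0 : E) R)ᶜ :=
    r.eventually_notMem (isCompact_closedBall 0 R)
  refine ((hout r).and (hout r')).mono fun t ht => ?_
  exact ((isPathConnected_compl_closedBall h 0 hR.le).joinedIn _ ht.1 _ ht.2).mono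
    (compl_subset_compl.2 hKR)

end NormedSpace

end ProperRay

section NormedSpace

variable {E : Type*} [NormedAddCommGroup E] [NormedSpace ℝ E]

theorem nonempty_ends [Nontrivial E] : Nonempty (Ends E) :=
  let ⟨_, hv⟩ := exists_ne (0 : E)
  ⟨(ProperRay.affine 0 hv).end⟩

theorem subsingleton_ends_of_one_lt_rank [ProperSpace E] (h : 1 < Module.rank ℝ E) :
    Subsingleton (Ends E) :=
  ⟨fun a b => Quot.induction_on₂ a b fun r r' =>
    Quot.sound (ProperRay.sameEnd_of_one_lt_rank h r r')⟩

end NormedSpace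

local notation "ℝ²" => EuclideanSpace ℝ (Fin 2)

theorem one_lt_rank_euclideanPlane : 1 < Module.rank ℝ ℝ² := by
  rw [← Module.finrank_eq_rank, finrank_euclideanSpace_fin]
  norm_num

theorem eq_toLp_coords (p : ℝ²) : p = !₂[p 0, p 1] := by
  ext i; fin_cases i <;> simp

theorem rat_mem_ratPlane (q : ℚ) (y : ℝ) : !₂[(q : ℝ), y] ∈ ratPlane :=
  Or.inl ⟨q, by simp⟩

theorem axis_mem_ratPlane (x : ℝ) : !₂[x, 0] ∈ ratPlane :=
  Or.inr (by simp)

theorem snd_eq_zero_of_mem_ratPlane {p : ℝ²} (hp : p ∈ ratPlane) (h : Irrational (p 0)) :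
    p 1 = 0 :=
  hp.resolve_left fun ⟨q, hq⟩ => h ⟨q, hq⟩

theorem isPathConnected_ratPlane : IsPathConnected ratPlane := by
  have hline (f : ℝ → ℝ²) (hf : Continuous f) (hmem : ∀ t, f t ∈ ratPlane) (s t : ℝ) :
      JoinedIn ratPlane (f s) (f t) :=
    ((isPathConnected_range hf).joinedIn _ ⟨s, rfl⟩ _ ⟨t, rfl⟩).mono
      (range_subset_iff.2 hmem)
  refine ⟨!₂[0, 0], axis_mem_ratPlane 0, fun {p} hp => ?_⟩
  refine (hline (fun x => !₂[x, 0]) (by fun_prop) axis_mem_ratPlane 0 (p 0)).trans ?_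
  rcases hp with ⟨q, hq⟩ | hp1
  · rw [eq_toLp_coords p, ← hq]
    exact hline (fun y => !₂[(q : ℝ), y]) (by fun_prop) (rat_mem_ratPlane q) 0 (p 1)
  · rw [eq_toLp_coords p, hp1]
    exact JoinedIn.refl (axis_mem_ratPlane _)

theorem dense_ratPlane : Dense ratPlane := by
  have hsurj : Function.Surjective fun p : ℝ × ℝ => !₂[p.1, p.2] :=
    fun y => ⟨(y 0, y 1), (eq_toLp_coords y).symm⟩
  have hdense : DenseRange fun p : ℚ × ℝ => !₂[(p.1 : ℝ), p.2] :=
    hsurj.denseRange.comp (Rat.denseRange_cast.prodMap denseRange_id) (by fun_prop)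
  exact Dense.mono (range_subset_iff.2 fun p : ℚ × ℝ => rat_mem_ratPlane p.1 p.2) hdense

theorem JoinedIn.exists_eq_axis {S : Set ratPlane} {a b : ratPlane} (h : JoinedIn S a b)
    {α : ℝ} (hα : Irrational α) (hαab : α ∈ Icc ((a : ℝ²) 0) ((b : ℝ²) 0)) :
    ∃ z ∈ S, (z : ℝ²) = !₂[α, 0] := by
  obtain ⟨γ, hγ⟩ := h
  obtain ⟨s, hs : (γ s : ℝ²) 0 = α⟩ :=
    intermediate_value_univ 0 1 (f := fun s => (γ s : ℝ²) 0) (by fun_prop)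
      (by simpa using hαab)
  refine ⟨γ s, hγ s, ?_⟩
  rw [eq_toLp_coords (γ s : ℝ²), snd_eq_zero_of_mem_ratPlane (γ s).2 (hs ▸ hα), hs]

def verticalRay (q : ℚ) : ProperRay ratPlane :=
  (ProperRay.affine !₂[(q : ℝ), 0] (v := !₂[0, 1]) (by simp)).codRestrict ratPlane fun t => by
    convert rat_mem_ratPlane q t using 1
    ext i; fin_cases i <;> simp [ProperRay.affine]

theorem verticalRay_apply (q : ℚ) (t : Ici (0 : ℝ)) :
    ((verticalRay q).1 t : ℝ²) = !₂[(q : ℝ), t] := by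
  ext i; fin_cases i <;> simp [verticalRay, ProperRay.codRestrict, ProperRay.affine]

theorem not_sameEnd_verticalRay {q q' : ℚ} (h : q < q') :
    ¬ SameEnd (verticalRay q) (verticalRay q') := by
  intro hse
  set K := (fun x : ℝ => (⟨!₂[x, 0], axis_mem_ratPlane x⟩ : ratPlane)) '' Icc (q : ℝ) q'
  obtain ⟨T, -, hT⟩ := hse K (isCompact_Icc.image (by fun_prop))
  obtain ⟨α, hα, hqα, hαq'⟩ := exists_irrational_btwn (Rat.cast_lt.2 h)
  obtain ⟨z, hzK, hz⟩ :=
    hT.exists_eq_axis hα (by simpa [verticalRay_apply] using ⟨hqα.le, hαq'.le⟩)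
  exact hzK ⟨α, ⟨hqα.le, hαq'.le⟩, Subtype.ext hz.symm⟩

theorem infinite_ends_ratPlane : Infinite (Ends ratPlane) := by
  refine Infinite.of_injective (fun q => (verticalRay q).end) fun q q' hqq' => ?_
  rcases lt_trichotomy q q' with h | h | h
  · exact absurd (ProperRay.end_eq_end_iff.1 hqq') (not_sameEnd_verticalRay h)
  · exact h
  · exact absurd (ProperRay.end_eq_end_iff.1 hqq'.symm) (not_sameEnd_verticalRay h)

/-- The space `X = (ℚ × ℝ) ∪ (ℝ × {0})` with the metric induced from
the Euclidean plane is connected and quasi-isometric to `ℝ²`; the plane `ℝ²` has exactly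
one end, while `X` has infinitely many ends.  (So the number of ends is not a
quasi-isometry invariant of non-geodesic spaces.) -/
theorem ratPlane_ends_not_qi_invariant :
    ConnectedSpace ↥ratPlane ∧
    (∃ (f : ↥ratPlane → EuclideanSpace ℝ (Fin 2)) (lam C : ℝ), 1 ≤ lam ∧ 0 ≤ C ∧
      (∀ a b : ↥ratPlane, lam⁻¹ * dist a b - C ≤ dist (f a) (f b) ∧
        dist (f a) (f b) ≤ lam * dist a b + C) ∧
      ∀ y : EuclideanSpace ℝ (Fin 2), ∃ x : ↥ratPlane, dist y (f x) ≤ C) ∧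
    (Nonempty (Ends (EuclideanSpace ℝ (Fin 2))) ∧
      Subsingleton (Ends (EuclideanSpace ℝ (Fin 2)))) ∧
    Infinite (Ends ↥ratPlane) := by
  refine ⟨isConnected_iff_connectedSpace.1 isPathConnected_ratPlane.isConnected,
    ⟨Subtype.val, 1, 1, le_rfl, zero_le_one, fun a b => ?_, fun y => ?_⟩,
    ⟨nonempty_ends, subsingleton_ends_of_one_lt_rank one_lt_rank_euclideanPlane⟩,
    infinite_ends_ratPlane⟩
  · rw [Subtype.dist_eq]
    constructor <;> linarith
  · obtain ⟨x, hx, hyx⟩ := dense_ratPlane.exists_dist_lt y one_pos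
    exact ⟨⟨x, hx⟩, hyx.le⟩

end
end
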